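/- Suppose HᴴH − GᴴG is positive definite. Then for any n_t×n_t Hermitian positive semidefinite matrix S, the matrix S^{1/2}(HᴴH − GᴴG)S^{1/2} is positive definite if and only if S is positive definite; equivalently, all generalized eigenvalues of the pencil (S^{1/2}HᴴH S^{1/2} + I, S^{1/2}GᴴG S^{1/2} + I) are strictly greater than 1 if and only if S is full rank. -/

import Mathlib

/-!
Write `Q = S^{1/2}`, which is Hermitian with `Q * Q = S`. For a positive definite `A`, the
conjugate `Qᴴ A Q` is positive definite exactly when `Q` is injective, since
`xᴴ Qᴴ A Q x = (Q x)ᴴ A (Q x)`. Applying this once with `A = HᴴH − GᴴG` and once with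
`A = 1` shows that both sides of the equivalence say that `Q` is injective.
-/

open Matrix
open scoped ComplexOrder

namespace Matrix.PosSemidef

noncomputable def sqrt {n 𝕜 : Type*} [Fintype n] [DecidableEq n] [RCLike 𝕜]
    {A : Matrix n n 𝕜} (hA : A.PosSemidef) : Matrix n n 𝕜 :=
  hA.1.eigenvectorUnitary.1 * diagonal ((↑) ∘ (√·) ∘ hA.1.eigenvalues) *
  (star hA.1.eigenvectorUnitary : Matrix n n 𝕜)

end Matrix.PosSemidef

namespace Matrix

variable {n : Type*} [Fintype n]

theorem PosDef.conjTranspose_mul_mul_same_iff {m R : Type*} [Fintype m] [Ring R]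
    [PartialOrder R] [StarRing R] {A : Matrix n n R} {B : Matrix n m R} (hA : A.PosDef) :
    (Bᴴ * A * B).PosDef ↔ Function.Injective B.mulVec := by
  refine ⟨fun h x y hxy => ?_, hA.conjTranspose_mul_mul_same⟩
  have hB : B *ᵥ (x - y) = 0 := by rw [mulVec_sub, hxy, sub_self]
  by_contra hne
  have hpos := h.dotProduct_mulVec_pos (sub_ne_zero.mpr hne)
  simp only [← mulVec_mulVec, hB, mulVec_zero, dotProduct_zero, lt_self_iff_false] at hpos

namespace PosSemidef

variable [DecidableEq n] {𝕜 : Type*} [RCLike 𝕜] {A : Matrix n n 𝕜}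

theorem sqrt_isHermitian (hA : A.PosSemidef) : hA.sqrt.IsHermitian := by
  refine isHermitian_mul_mul_conjTranspose _ ?_
  rw [isHermitian_diagonal_iff]
  intro i
  simp [IsSelfAdjoint]

theorem sqrt_mul_self (hA : A.PosSemidef) : hA.sqrt * hA.sqrt = A := by
  set U : Matrix n n 𝕜 := hA.1.eigenvectorUnitary.1
  set D : Matrix n n 𝕜 := diagonal ((↑) ∘ (√·) ∘ hA.1.eigenvalues)
  have hUU : star U * U = 1 := Unitary.coe_star_mul_self _
  have hDD : D * D = diagonal (RCLike.ofReal ∘ hA.1.eigenvalues) := by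
    rw [diagonal_mul_diagonal]
    congr 1
    funext i
    simp only [Function.comp_apply, ← RCLike.ofReal_mul,
      Real.mul_self_sqrt (hA.eigenvalues_nonneg i)]
  calc hA.sqrt * hA.sqrt = U * (D * (star U * U) * D) * star U := by
        simp only [sqrt, Matrix.mul_assoc]; rfl
    _ = A := by
        rw [hUU, Matrix.mul_one, hDD]
        exact hA.1.spectral_theorem.symm

end PosSemidef

end Matrix

/-- If `HᴴH − GᴴG ≻ 0`, then for any PSD `S`, the matrix
`S^{1/2}(HᴴH − GᴴG)S^{1/2}` is positive definite iff `S` is positive definite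
(iff all generalized eigenvalues of the corresponding pencil exceed 1). -/
theorem stmt7 {nr ne nt : ℕ}
    (H : Matrix (Fin nr) (Fin nt) ℂ) (G : Matrix (Fin ne) (Fin nt) ℂ)
    (hHG : (Hᴴ * H - Gᴴ * G).PosDef)
    (S : Matrix (Fin nt) (Fin nt) ℂ) (hS : S.PosSemidef) :
    (hS.sqrt * (Hᴴ * H - Gᴴ * G) * hS.sqrt).PosDef ↔ S.PosDef := by
  have hQ : hS.sqrtᴴ = hS.sqrt := hS.sqrt_isHermitian
  have hS_eq : hS.sqrtᴴ * 1 * hS.sqrt = S := by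
    rw [Matrix.mul_one, hQ, hS.sqrt_mul_self]
  calc (hS.sqrt * (Hᴴ * H - Gᴴ * G) * hS.sqrt).PosDef
        ↔ Function.Injective hS.sqrt.mulVec := by
        simpa only [hQ] using hHG.conjTranspose_mul_mul_same_iff (B := hS.sqrt)
    _ ↔ S.PosDef := by rw [← PosDef.one.conjTranspose_mul_mul_same_iff, hS_eq]
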